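/- Let γ > 0 and let w₁, w₃ : (ξ, η) → ℝ be a maximal solution of the system w₁' = γ·w₁·w₃, w₃' = w₁² with w₁ and w₃ everywhere positive, where maximal means the solution does not extend to a solution on any open interval strictly containing (ξ, η) (so that η < ∞). Then for any t₁ ∈ (ξ, η), the integral ∫_{t₁}^{η} w₁(t)·√(w₃(t)) dt diverges to +∞. (Geometrically: the corresponding biaxial metric g = w₁²w₃ dt² + w₃σ₁² + w₃σ₂² + (w₁²/w₃)σ₃² is complete at the t = η end.) -/

import Mathlib

/-- The biaxial reduced system `w₁' = γ·w₁·w₃`, `w₃' = w₁²` on a set `J`. -/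
def BiaxialSystem (γ : ℝ) (w₁ w₃ : ℝ → ℝ) (J : Set ℝ) : Prop :=
  (∀ t ∈ J, HasDerivAt w₁ (γ * w₁ t * w₃ t) t) ∧
  (∀ t ∈ J, HasDerivAt w₃ ((w₁ t) ^ 2) t)

/-- A solution of the biaxial system on an open interval `I` is maximal if it does not
extend to a solution of the same system on any open interval strictly containing `I`. -/
def BiaxialMaximalSolution (γ : ℝ) (w₁ w₃ : ℝ → ℝ) (I : Set ℝ) : Prop :=
  BiaxialSystem γ w₁ w₃ I ∧
  ∀ J : Set ℝ, IsOpen J → J.OrdConnected → I ⊆ J → I ≠ J →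
    ¬ ∃ w₁' w₃' : ℝ → ℝ, BiaxialSystem γ w₁' w₃' J ∧
      Set.EqOn w₁' w₁ I ∧ Set.EqOn w₃' w₃ I

/-!
Along a solution the energy `w₁² - γ w₃²` is conserved and `w₃` increases, so `w₁ ≤ K w₃` for
`t ≥ t₁`. Then `(√w₃)' = w₁² / (2√w₃) ≤ (K/2) w₁ √w₃`, so a finite integral bounds `w₃`, and
with it `w₁`, on `[t₁, η)`. If `η = ∞` this contradicts `w₃' = w₁² ≥ w₁(t₁)² > 0`. If `η < ∞`,
the bounded solution of the locally Lipschitz autonomous system extends past `η`: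
Picard–Lindelöf gives a uniform existence time for initial values in a bounded set, so a local
solution started close enough to `η` runs past it and agrees with the given one by uniqueness.
This contradicts maximality.
-/

open Set Metric MeasureTheory
open scoped NNReal

theorem IsOpen.csSup_notMem {α : Type*} [ConditionallyCompleteLinearOrder α] [TopologicalSpace α]
    [OrderTopology α] [DenselyOrdered α] [NoMaxOrder α] {s : Set α} (hs : IsOpen s)
    (hbdd : BddAbove s) : sSup s ∉ s := fun h => by
  obtain ⟨u, hu, hus⟩ := exists_Ico_subset_of_mem_nhds (hs.mem_nhds h) (exists_gt _)
  obtain ⟨c, hc, hcu⟩ := exists_between hu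
  exact (le_csSup hbdd (hus ⟨hc.le, hcu⟩)).not_gt hc

theorem IsOpen.monotoneOn_of_hasDerivAt_nonneg {D : Set ℝ} (hDo : IsOpen D) (hDc : D.OrdConnected)
    {f f' : ℝ → ℝ} (hf : ∀ x ∈ D, HasDerivAt f (f' x) x) (hf' : ∀ x ∈ D, 0 ≤ f' x) :
    MonotoneOn f D :=
  monotoneOn_of_hasDerivWithinAt_nonneg hDc.convex
    (fun x hx => (hf x hx).continuousAt.continuousWithinAt)
    (by rw [hDo.interior_eq]; exact fun x hx => (hf x hx).hasDerivWithinAt)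
    (by rwa [hDo.interior_eq])

theorem sub_le_setIntegral_of_hasDerivAt_le {f f' φ : ℝ → ℝ} {S : Set ℝ} {a b : ℝ} (hab : a ≤ b)
    (hf : ContinuousOn f (Icc a b)) (hf' : ∀ x ∈ Ioo a b, HasDerivAt f (f' x) x)
    (hle : ∀ x ∈ Ioo a b, f' x ≤ φ x) (hS : MeasurableSet S) (habS : Ioc a b ⊆ S)
    (hφ : IntegrableOn φ S) (hφ₀ : ∀ x ∈ S, 0 ≤ φ x) : f b - f a ≤ ∫ x in S, φ x :=
  calc f b - f a ≤ ∫ x in a..b, φ x :=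
        intervalIntegral.sub_le_integral_of_hasDeriv_right_of_le hab hf
          (fun x hx => (hf' x hx).hasDerivWithinAt)
          ((integrableOn_Icc_iff_integrableOn_Ioc).2 (hφ.mono_set habS)) hle
    _ = ∫ x in Ioc a b, φ x := intervalIntegral.integral_of_le hab
    _ ≤ ∫ x in S, φ x :=
        setIntegral_mono_set hφ ((ae_restrict_iff' hS).2 (ae_of_all _ hφ₀)) habS.eventuallyLE

section ODE

variable {E : Type*} [NormedAddCommGroup E] [NormedSpace ℝ E] {v : E → E}

theorem ODE_solution_unique_of_locallyLipschitz (hv : LocallyLipschitz v) {f g : ℝ → E}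
    {a b : ℝ} (hf : ∀ t ∈ Icc a b, HasDerivAt f (v (f t)) t)
    (hg : ∀ t ∈ Icc a b, HasDerivAt g (v (g t)) t) (ha : f a = g a) :
    EqOn f g (Icc a b) := by
  have hfc : ContinuousOn f (Icc a b) := fun t ht => (hf t ht).continuousAt.continuousWithinAt
  have hgc : ContinuousOn g (Icc a b) := fun t ht => (hg t ht).continuousAt.continuousWithinAt
  obtain ⟨L, hL⟩ := hv.locallyLipschitzOn.exists_lipschitzOnWith_of_compact
    ((isCompact_Icc.image_of_continuousOn hfc).union (isCompact_Icc.image_of_continuousOn hgc))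
  exact ODE_solution_unique_of_mem_Icc_right (v := fun _ => v) (fun _ _ => hL) hfc
    (fun t ht => (hf t (Ico_subset_Icc_self ht)).hasDerivWithinAt)
    (fun t ht => Or.inl (mem_image_of_mem f (Ico_subset_Icc_self ht))) hgc
    (fun t ht => (hg t (Ico_subset_Icc_self ht)).hasDerivWithinAt)
    (fun t ht => Or.inr (mem_image_of_mem g (Ico_subset_Icc_self ht))) ha

theorem exists_pos_forall_norm_le_exists_hasDerivAt [ProperSpace E] (hv : LocallyLipschitz v)
    (R : ℝ) : ∃ ε > 0, ∀ x : E, ‖x‖ ≤ R → ∀ t₀ : ℝ, ∃ f : ℝ → E, f t₀ = x ∧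
      ∀ t ∈ Ioo (t₀ - ε) (t₀ + ε), HasDerivAt f (v (f t)) t := by
  obtain ⟨K, hK⟩ := hv.locallyLipschitzOn.exists_lipschitzOnWith_of_compact
    (isCompact_closedBall (0 : E) (R + 1))
  obtain ⟨C, hC⟩ := (isCompact_closedBall (0 : E) (R + 1)).exists_bound_of_continuousOn
    hv.continuous.continuousOn
  set L : ℝ≥0 := ⟨max C 1, by positivity⟩
  have hL : (0 : ℝ) < L := lt_of_lt_of_le one_pos (le_max_right C 1)
  refine ⟨1 / L, by positivity, fun x hx t₀ => ?_⟩
  have hball : closedBall x 1 ⊆ closedBall 0 (R + 1) :=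
    closedBall_subset_closedBall' (by rw [dist_zero_right]; linarith)
  have hpl : IsPicardLindelof (fun _ => v) (tmin := t₀ - 1 / L) (tmax := t₀ + 1 / L)
      ⟨t₀, by constructor <;> linarith [one_div_pos.2 hL]⟩ x 1 0 L K :=
    .of_time_independent (fun y hy => (hC y (hball (by simpa using hy))).trans (le_max_left C 1))
      (hK.mono (by simpa using hball)) (by simp [hL.ne'])
  obtain ⟨f, hf₀, hf⟩ := hpl.exists_eq_forall_mem_Icc_hasDerivWithinAt₀
  exact ⟨f, hf₀, fun t ht => (hf t (Ioo_subset_Icc_self ht)).hasDerivAt (Icc_mem_nhds ht.1 ht.2)⟩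

theorem exists_extension_of_bddAbove_of_norm_le [ProperSpace E] (hv : LocallyLipschitz v)
    {I : Set ℝ} (hIo : IsOpen I) (hIc : I.OrdConnected) (hbdd : BddAbove I) {W : ℝ → E}
    (hW : ∀ t ∈ I, HasDerivAt W (v (W t)) t) {t₁ R : ℝ} (ht₁ : t₁ ∈ I)
    (hR : ∀ t ∈ I, t₁ ≤ t → ‖W t‖ ≤ R) :
    ∃ J : Set ℝ, IsOpen J ∧ J.OrdConnected ∧ I ⊆ J ∧ I ≠ J ∧
      ∃ W' : ℝ → E, (∀ t ∈ J, HasDerivAt W' (v (W' t)) t) ∧ EqOn W' W I := by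
  classical
  obtain ⟨ε, hε, hloc⟩ := exists_pos_forall_norm_le_exists_hasDerivAt hv R
  have hηI : sSup I ∉ I := hIo.csSup_notMem hbdd
  have hIη : ∀ t ∈ I, t < sSup I := fun t ht =>
    (le_csSup hbdd ht).lt_of_ne fun h => hηI (h ▸ ht)
  obtain ⟨s₀, hs₀I, hs₀⟩ : ∃ s₀ ∈ I, max t₁ (sSup I - ε / 2) < s₀ :=
    exists_lt_of_lt_csSup ⟨t₁, ht₁⟩ (max_lt (hIη t₁ ht₁) (by linarith))
  rw [max_lt_iff] at hs₀
  have hηε : sSup I < s₀ + ε := by linarith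
  obtain ⟨f, hf₀, hf⟩ := hloc (W s₀) (hR s₀ hs₀I hs₀.1.le) s₀
  have hfW : ∀ t ∈ I, s₀ ≤ t → f t = W t := fun t ht hs₀t =>
    ODE_solution_unique_of_locallyLipschitz hv
      (fun x hx => hf x ⟨by linarith [hx.1], by linarith [hx.2, hIη t ht]⟩)
      (fun x hx => hW x (hIc.out hs₀I ht hx)) hf₀ ⟨hs₀t, le_rfl⟩
  have hW'f : EqOn (I.piecewise W f) f (Ioo s₀ (s₀ + ε)) := fun t ht => by
    by_cases htI : t ∈ I
    · rw [piecewise_eq_of_mem _ _ _ htI, hfW t htI ht.1.le]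
    · exact piecewise_eq_of_notMem _ _ _ htI
  obtain ⟨s₁, hs₁I, hs₁⟩ := exists_lt_of_lt_csSup ⟨t₁, ht₁⟩ (hIη s₀ hs₀I)
  refine ⟨I ∪ Ioo s₀ (s₀ + ε), hIo.union isOpen_Ioo,
    (hIc.isPreconnected.union s₁ hs₁I (show s₁ ∈ Ioo s₀ (s₀ + ε) from
      ⟨hs₁, (hIη s₁ hs₁I).trans hηε⟩) isPreconnected_Ioo).ordConnected,
    subset_union_left, fun h => hηI ((Set.ext_iff.1 h _).2 (Or.inr ⟨hIη s₀ hs₀I, hηε⟩)),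
    I.piecewise W f, ?_, piecewise_eqOn _ _ _⟩
  rintro t (ht | ht)
  · rw [piecewise_eq_of_mem _ _ _ ht]
    exact (hW t ht).congr_of_eventuallyEq
      (Filter.eventuallyEq_of_mem (hIo.mem_nhds ht) (piecewise_eqOn _ _ _))
  · rw [hW'f ht]
    exact (hf t ⟨by linarith [ht.1], ht.2⟩).congr_of_eventuallyEq
      (Filter.eventuallyEq_of_mem (isOpen_Ioo.mem_nhds ht) hW'f)

end ODE

def biaxialField (γ : ℝ) (p : ℝ × ℝ) : ℝ × ℝ := (γ * p.1 * p.2, p.1 ^ 2)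

theorem locallyLipschitz_biaxialField (γ : ℝ) : LocallyLipschitz (biaxialField γ) :=
  ContDiff.locallyLipschitz (𝕂 := ℝ) (by unfold biaxialField; fun_prop)

namespace BiaxialSystem

variable {γ : ℝ} {w₁ w₃ : ℝ → ℝ} {I : Set ℝ}

theorem of_hasDerivAt {W : ℝ → ℝ × ℝ} (hW : ∀ t ∈ I, HasDerivAt W (biaxialField γ (W t)) t) :
    BiaxialSystem γ (fun t => (W t).1) (fun t => (W t).2) I :=
  ⟨fun t ht => hasFDerivAt_fst.comp_hasDerivAt (f := W) (l := Prod.fst) t (hW t ht),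
    fun t ht => hasFDerivAt_snd.comp_hasDerivAt (f := W) (l := Prod.snd) t (hW t ht)⟩

theorem hasDerivAt_prodMk (h : BiaxialSystem γ w₁ w₃ I) :
    ∀ t ∈ I, HasDerivAt (fun s => (w₁ s, w₃ s)) (biaxialField γ (w₁ t, w₃ t)) t :=
  fun t ht => (h.1 t ht).prodMk (h.2 t ht)

theorem monotoneOn_w₃ (h : BiaxialSystem γ w₁ w₃ I) (hIo : IsOpen I) (hIc : I.OrdConnected) :
    MonotoneOn w₃ I :=
  hIo.monotoneOn_of_hasDerivAt_nonneg hIc h.2 fun _ _ => sq_nonneg _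

theorem monotoneOn_w₁ (h : BiaxialSystem γ w₁ w₃ I) (hIo : IsOpen I) (hIc : I.OrdConnected)
    (hγ : 0 ≤ γ) (h₁ : ∀ t ∈ I, 0 ≤ w₁ t) (h₃ : ∀ t ∈ I, 0 ≤ w₃ t) : MonotoneOn w₁ I :=
  hIo.monotoneOn_of_hasDerivAt_nonneg hIc h.1 fun t ht =>
    mul_nonneg (mul_nonneg hγ (h₁ t ht)) (h₃ t ht)

theorem energy_eq (h : BiaxialSystem γ w₁ w₃ I) (hIo : IsOpen I) (hIc : IsPreconnected I)
    {s t : ℝ} (hs : s ∈ I) (ht : t ∈ I) :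
    w₁ s ^ 2 - γ * w₃ s ^ 2 = w₁ t ^ 2 - γ * w₃ t ^ 2 := by
  have hE : ∀ x ∈ I, HasDerivAt (fun y => w₁ y ^ 2 - γ * w₃ y ^ 2) 0 x := fun x hx =>
    (((h.1 x hx).fun_pow 2).fun_sub (((h.2 x hx).fun_pow 2).const_mul γ)).congr_deriv (by
      norm_num
      ring)
  exact hIo.is_const_of_deriv_eq_zero hIc
    (fun x hx => (hE x hx).differentiableAt.differentiableWithinAt) (fun x hx => (hE x hx).deriv)
    hs ht

theorem exists_w₁_le_mul_w₃ (h : BiaxialSystem γ w₁ w₃ I) (hIo : IsOpen I) (hIc : I.OrdConnected)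
    (h₃ : ∀ t ∈ I, 0 < w₃ t) {t₁ : ℝ} (ht₁ : t₁ ∈ I) :
    ∃ K, 0 ≤ K ∧ ∀ t ∈ I, t₁ ≤ t → w₁ t ≤ K * w₃ t := by
  set c := |w₁ t₁ ^ 2 - γ * w₃ t₁ ^ 2| / w₃ t₁ ^ 2
  have hc : 0 ≤ c := by positivity
  refine ⟨|γ| + c + 1, by positivity, fun t ht ht₁t => ?_⟩
  have hw₃ : w₃ t₁ ≤ w₃ t := h.monotoneOn_w₃ hIo hIc ht₁ ht ht₁t
  have hE : c * w₃ t₁ ^ 2 = |w₁ t₁ ^ 2 - γ * w₃ t₁ ^ 2| :=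
    div_mul_cancel₀ _ (pow_pos (h₃ t₁ ht₁) 2).ne'
  have hsq : w₁ t ^ 2 ≤ (|γ| + c) * w₃ t ^ 2 := by
    have := h.energy_eq hIo hIc.isPreconnected ht ht₁
    nlinarith [le_abs_self (w₁ t₁ ^ 2 - γ * w₃ t₁ ^ 2),
      mul_le_mul_of_nonneg_right (le_abs_self γ) (sq_nonneg (w₃ t)),
      mul_le_mul_of_nonneg_left (pow_le_pow_left₀ (h₃ t₁ ht₁).le hw₃ 2) hc]
  have hsq' : w₁ t ^ 2 ≤ ((|γ| + c + 1) * w₃ t) ^ 2 := by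
    nlinarith [abs_nonneg γ, sq_nonneg (w₃ t)]
  exact (abs_le_of_sq_le_sq' hsq' (by have := h₃ t ht; positivity)).2

theorem exists_w₃_le_of_integrableOn (h : BiaxialSystem γ w₁ w₃ I) (hIo : IsOpen I)
    (hIc : I.OrdConnected) (h₁ : ∀ t ∈ I, 0 ≤ w₁ t) (h₃ : ∀ t ∈ I, 0 < w₃ t) {t₁ : ℝ}
    (ht₁ : t₁ ∈ I) (hint : IntegrableOn (fun t => w₁ t * √(w₃ t)) (I ∩ Ioi t₁)) :
    ∃ B, ∀ t ∈ I, t₁ ≤ t → w₃ t ≤ B := by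
  obtain ⟨K, hK, hw₁⟩ := h.exists_w₁_le_mul_w₃ hIo hIc h₃ ht₁
  set M := ∫ t in I ∩ Ioi t₁, K / 2 * (w₁ t * √(w₃ t))
  refine ⟨(√(w₃ t₁) + M) ^ 2, fun t ht ht₁t => ?_⟩
  have hIcc : Icc t₁ t ⊆ I := hIc.out ht₁ ht
  have hsqrt : √(w₃ t) - √(w₃ t₁) ≤ M := by
    refine sub_le_setIntegral_of_hasDerivAt_le (f := fun s => √(w₃ s)) ht₁t
      (fun x hx => (h.2 x (hIcc hx)).continuousAt.sqrt.continuousWithinAt)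
      (fun x hx => have hxI := hIcc (Ioo_subset_Icc_self hx); (h.2 x hxI).sqrt (h₃ x hxI).ne') ?_
      (hIo.measurableSet.inter measurableSet_Ioi)
      (fun x hx => ⟨hIcc (Ioc_subset_Icc_self hx), hx.1⟩) (hint.const_mul _)
      (fun x hx => by have := h₁ x hx.1; positivity)
    intro x hx
    have hxI := hIcc (Ioo_subset_Icc_self hx)
    have hs : 0 < √(w₃ x) := Real.sqrt_pos.2 (h₃ x hxI)
    rw [div_le_iff₀ (by positivity)]
    calc w₁ x ^ 2 ≤ w₁ x * (K * w₃ x) := by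
          rw [sq]; exact mul_le_mul_of_nonneg_left (hw₁ x hxI hx.1.le) (h₁ x hxI)
      _ = K / 2 * (w₁ x * √(w₃ x)) * (2 * √(w₃ x)) := by
          linear_combination (-(K * w₁ x)) * Real.mul_self_sqrt (h₃ x hxI).le
  calc w₃ t = √(w₃ t) ^ 2 := (Real.sq_sqrt (h₃ t ht).le).symm
    _ ≤ (√(w₃ t₁) + M) ^ 2 := pow_le_pow_left₀ (Real.sqrt_nonneg _) (by linarith) 2

theorem exists_norm_le_of_integrableOn (h : BiaxialSystem γ w₁ w₃ I) (hIo : IsOpen I)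
    (hIc : I.OrdConnected) (h₁ : ∀ t ∈ I, 0 ≤ w₁ t) (h₃ : ∀ t ∈ I, 0 < w₃ t) {t₁ : ℝ}
    (ht₁ : t₁ ∈ I) (hint : IntegrableOn (fun t => w₁ t * √(w₃ t)) (I ∩ Ioi t₁)) :
    ∃ R, ∀ t ∈ I, t₁ ≤ t → ‖(w₁ t, w₃ t)‖ ≤ R := by
  obtain ⟨K, hK, hw₁⟩ := h.exists_w₁_le_mul_w₃ hIo hIc h₃ ht₁
  obtain ⟨B, hB⟩ := h.exists_w₃_le_of_integrableOn hIo hIc h₁ h₃ ht₁ hint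
  refine ⟨max (K * B) B, fun t ht ht₁t => ?_⟩
  rw [Prod.norm_mk, Real.norm_of_nonneg (h₁ t ht), Real.norm_of_nonneg (h₃ t ht).le]
  exact max_le_max ((hw₁ t ht ht₁t).trans (mul_le_mul_of_nonneg_left (hB t ht ht₁t) hK))
    (hB t ht ht₁t)

theorem bddAbove_of_norm_le (h : BiaxialSystem γ w₁ w₃ I) (hIo : IsOpen I)
    (hIc : I.OrdConnected) (hγ : 0 ≤ γ) (h₁ : ∀ t ∈ I, 0 < w₁ t) (h₃ : ∀ t ∈ I, 0 ≤ w₃ t)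
    {t₁ R : ℝ} (ht₁ : t₁ ∈ I) (hR : ∀ t ∈ I, t₁ ≤ t → ‖(w₁ t, w₃ t)‖ ≤ R) : BddAbove I := by
  have hw₃R : ∀ t ∈ I, t₁ ≤ t → w₃ t ≤ R := fun t ht ht₁t =>
    (le_abs_self _).trans ((norm_snd_le (w₁ t, w₃ t)).trans (hR t ht ht₁t))
  have hc : 0 < w₁ t₁ ^ 2 := pow_pos (h₁ t₁ ht₁) 2
  refine ⟨t₁ + (R - w₃ t₁) / w₁ t₁ ^ 2, fun t ht => ?_⟩
  rcases le_total t t₁ with htt₁ | ht₁t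
  · have : 0 ≤ (R - w₃ t₁) / w₁ t₁ ^ 2 := div_nonneg (by linarith [hw₃R t₁ ht₁ le_rfl]) hc.le
    linarith
  have hIcc : Icc t₁ t ⊆ I := hIc.out ht₁ ht
  have hgrowth : w₁ t₁ ^ 2 * (t - t₁) ≤ w₃ t - w₃ t₁ :=
    (convex_Icc t₁ t).mul_sub_le_image_sub_of_le_deriv
      (fun x hx => (h.2 x (hIcc hx)).continuousAt.continuousWithinAt)
      (fun x hx => (h.2 x (hIcc (interior_subset hx))).differentiableAt.differentiableWithinAt)
      (fun x hx => by
        have hxI := hIcc (interior_subset hx)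
        rw [(h.2 x hxI).deriv]
        rw [interior_Icc] at hx
        exact pow_le_pow_left₀ (h₁ t₁ ht₁).le
          (h.monotoneOn_w₁ hIo hIc hγ (fun s hs => (h₁ s hs).le) h₃ ht₁ hxI hx.1.le) 2)
      t₁ (left_mem_Icc.2 ht₁t) t (right_mem_Icc.2 ht₁t) ht₁t
  have := hw₃R t ht ht₁t
  rw [← sub_le_iff_le_add', le_div_iff₀ hc]
  linarith

end BiaxialSystem

/-- For a maximal positive solution of `w₁' = γ·w₁·w₃`, `w₃' = w₁²`
(`γ > 0`) on an open interval `(ξ, η)`, the integral `∫_{t₁}^{η} w₁·√w₃ dt` diverges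
for any `t₁` in the interval; i.e. the corresponding biaxial metric is complete at
the `t = η` end. -/
theorem biaxial_maximal_solution_complete_at_eta
    (γ : ℝ) (hγ : 0 < γ)
    (I : Set ℝ) (hIopen : IsOpen I) (hIconn : I.OrdConnected)
    (w₁ w₃ : ℝ → ℝ)
    (hmax : BiaxialMaximalSolution γ w₁ w₃ I)
    (h1pos : ∀ t ∈ I, 0 < w₁ t) (h3pos : ∀ t ∈ I, 0 < w₃ t)
    (t₁ : ℝ) (ht₁ : t₁ ∈ I) :
    ¬ MeasureTheory.IntegrableOn (fun t => w₁ t * Real.sqrt (w₃ t))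
      (I ∩ Set.Ioi t₁) := by
  intro hint
  obtain ⟨hsys, hext⟩ := hmax
  obtain ⟨R, hR⟩ := hsys.exists_norm_le_of_integrableOn hIopen hIconn
    (fun t ht => (h1pos t ht).le) h3pos ht₁ hint
  have hbdd : BddAbove I := hsys.bddAbove_of_norm_le hIopen hIconn hγ.le h1pos
    (fun t ht => (h3pos t ht).le) ht₁ hR
  obtain ⟨J, hJo, hJc, hIJ, hIJne, W, hW, hWI⟩ := exists_extension_of_bddAbove_of_norm_le
    (locallyLipschitz_biaxialField γ) hIopen hIconn hbdd hsys.hasDerivAt_prodMk ht₁ hR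
  exact hext J hJo hJc hIJ hIJne ⟨_, _, BiaxialSystem.of_hasDerivAt hW,
    fun t ht => congrArg Prod.fst (hWI ht), fun t ht => congrArg Prod.snd (hWI ht)⟩
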